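/- For every positive integer ℓ, as formal power series in q: (1/(q;q)_∞) · Σ_{j=-ℓ}^{ℓ-1} (-1)^j q^{j(3j+1)/2} = 1 + (-1)^{ℓ-1} · Σ_{n=0}^{∞} q^{(2ℓ+1)n + n^2 + (3ℓ^2+ℓ)/2} (1 - q^ℓ) / ((q;q)_n (q;q)_{n+2ℓ} (1 - q^{n+ℓ})). -/

import Mathlib

noncomputable section
open PowerSeries

/-- Coefficientwise-stable infinite product of power series (valid when the `i`-th factor
is `1 + (terms of order > i)`, so each coefficient stabilizes). -/
def iProd (f : ℕ → PowerSeries ℚ) : PowerSeries ℚ :=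
  PowerSeries.mk fun n => PowerSeries.coeff n (∏ i ∈ Finset.range (n + 1), f i)

/-- Coefficientwise-stable infinite sum of power series (valid when the `i`-th term
has order ≥ i, so each coefficient stabilizes). -/
def iSum (f : ℕ → PowerSeries ℚ) : PowerSeries ℚ :=
  PowerSeries.mk fun n => PowerSeries.coeff n (∑ i ∈ Finset.range (n + 1), f i)

/-- `(q;q)_n`. -/
def pq (n : ℕ) : PowerSeries ℚ := ∏ i ∈ Finset.range n, (1 - X ^ (i + 1))

/-- `(q;q)_∞`. -/
def pqInf : PowerSeries ℚ := iProd fun i => 1 - X ^ (i + 1)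

/-- `(-1)^j` for an integer `j`, as a power series. -/
def zsgn (j : ℤ) : PowerSeries ℚ := if Even j then 1 else -1

/-! ### Basic lemmas on `pq` and inverses -/

lemma pq_succ (n : ℕ) : pq (n+1) = pq n * (1 - X ^ (n+1)) := Finset.prod_range_succ _ _

lemma constCoeff_one_sub (k : ℕ) (hk : 1 ≤ k) :
    constantCoeff (1 - X ^ k : PowerSeries ℚ) = 1 := by
  rw [map_sub, map_one, map_pow, constantCoeff_X, zero_pow (by omega), sub_zero]

lemma one_sub_mul_inv (k : ℕ) (hk : 1 ≤ k) :
    (1 - X ^ k) * (1 - X ^ k : PowerSeries ℚ)⁻¹ = 1 := by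
  apply PowerSeries.mul_inv_cancel
  rw [constCoeff_one_sub k hk]; exact one_ne_zero

lemma constCoeff_pq (n : ℕ) : constantCoeff (pq n) = 1 := by
  induction n with
  | zero => simp [pq]
  | succ n ih => rw [pq_succ, map_mul, ih, constCoeff_one_sub _ (by omega), one_mul]

lemma pq_mul_inv (n : ℕ) : pq n * (pq n)⁻¹ = 1 := by
  apply PowerSeries.mul_inv_cancel
  rw [constCoeff_pq]; exact one_ne_zero

lemma pq_zero_inv : (pq 0 : PowerSeries ℚ)⁻¹ = 1 := by
  have h := pq_mul_inv 0
  have h0 : pq 0 = 1 := by simp [pq]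
  rwa [h0, one_mul] at h

lemma pq_inv_succ (n : ℕ) : (pq n : PowerSeries ℚ)⁻¹ = (1 - X^(n+1)) * (pq (n+1))⁻¹ := by
  calc (pq n)⁻¹ = (pq n)⁻¹ * (pq (n+1) * (pq (n+1))⁻¹) := by rw [pq_mul_inv, mul_one]
  _ = (pq n * (pq n)⁻¹) * ((1 - X^(n+1)) * (pq (n+1))⁻¹) := by rw [pq_succ]; ring
  _ = (1 - X^(n+1)) * (pq (n+1))⁻¹ := by rw [pq_mul_inv, one_mul]

lemma pq_inv_split (n : ℕ) : (pq (n+1) : PowerSeries ℚ)⁻¹ = (pq n)⁻¹ * (1 - X^(n+1))⁻¹ := by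
  have h1 := pq_mul_inv n
  have h2 := pq_mul_inv (n+1)
  have h3 := one_sub_mul_inv (n+1) (by omega)
  calc (pq (n+1))⁻¹
      = ((pq n) * (pq n)⁻¹) * (((1-X^(n+1)) * (1-X^(n+1))⁻¹) * (pq (n+1))⁻¹) := by
        rw [h1, h3]; ring
    _ = (pq (n+1) * (pq (n+1))⁻¹) * ((pq n)⁻¹ * (1 - X^(n+1))⁻¹) := by rw [pq_succ]; ring
    _ = (pq n)⁻¹ * (1 - X^(n+1))⁻¹ := by rw [h2, one_mul]

/-! ### Coefficient extraction lemmas -/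

lemma coeff_X_pow_mul_lt (n e : ℕ) (h : n < e) (y : PowerSeries ℚ) :
    coeff n (X ^ e * y) = 0 := by
  rw [coeff_mul]
  apply Finset.sum_eq_zero
  intro p hp
  rw [Finset.HasAntidiagonal.mem_antidiagonal] at hp
  rw [coeff_X_pow, if_neg (by omega), zero_mul]

lemma coeff_mul_congr {n : ℕ} (g : PowerSeries ℚ) {y z : PowerSeries ℚ}
    (h : ∀ m ≤ n, coeff m y = coeff m z) :
    coeff n (g * y) = coeff n (g * z) := by
  rw [coeff_mul, coeff_mul]
  apply Finset.sum_congr rfl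
  intro p hp
  rw [Finset.HasAntidiagonal.mem_antidiagonal] at hp
  rw [h p.2 (by omega)]

lemma coeff_iSum_eq (f : ℕ → PowerSeries ℚ)
    (hf : ∀ i n : ℕ, n < i → coeff n (f i) = 0) (n K : ℕ) (hK : n < K) :
    coeff n (iSum f) = coeff n (∑ i ∈ Finset.range K, f i) := by
  rw [iSum, coeff_mk, map_sum, map_sum]
  apply Finset.sum_subset (Finset.range_subset_range.mpr (by omega))
  intro i _ hi
  rw [Finset.mem_range, not_lt] at hi
  exact hf i n (by omega)

lemma coeff_pqInf_eq (m K : ℕ) (h : m < K) : coeff m pqInf = coeff m (pq K) := by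
  have base : coeff m pqInf = coeff m (pq (m+1)) := by
    rw [pqInf, iProd, coeff_mk]; rfl
  have step : ∀ J, m < J → coeff m (pq J) = coeff m (pq (J+1)) := by
    intro J hJ
    rw [pq_succ, mul_sub, mul_one, map_sub, mul_comm (pq J), coeff_X_pow_mul_lt m (J+1) (by omega),
      sub_zero]
  have : ∀ c : ℕ, coeff m pqInf = coeff m (pq (m+1+c)) := by
    intro c
    induction c with
    | zero => exact base
    | succ c ih =>
        rw [ih, step (m+1+c) (by omega), show m+1+c+1 = m+1+(c+1) from by omega]
  have hc := this (K - (m+1))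
  rwa [show m+1+(K-(m+1)) = K by omega] at hc

/-! ### Durfee rectangle machinery -/

/-- Durfee summand. -/
def dd (a r : ℕ) : PowerSeries ℚ := X^(r*(r+a)) * ((pq r)⁻¹ * (pq (r+a))⁻¹)

/-- Durfee telescoping remainder. -/
def gg (a K : ℕ) : PowerSeries ℚ := X^((K+1)*(K+1+a)) * ((pq K)⁻¹ * (pq (K+1+a))⁻¹)

/-- termwise Durfee telescoping identity. -/
lemma durfee_term (a K : ℕ) :
    dd a (K+1) + gg a (K+1) = dd (a+1) (K+1) + gg a K := by
  unfold dd gg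
  have h2 : (K+1+1)*(K+1+1+a) = (K+1)*(K+1+a) + ((K+1) + (K+a+2)) := by ring
  have h3 : (K+1)*((K+1)+(a+1)) = (K+1)*(K+1+a) + (K+1) := by ring
  have h5 : K+1+1+a = K+a+2 := by omega
  have h6 : K+1+(a+1) = K+a+2 := by omega
  have h7 : (K+1)*((K+1)+a) = (K+1)*(K+1+a) := by ring
  rw [h2, h3, h5, h6, h7, pq_inv_succ (K+1+a), pq_inv_succ K]
  have h8 : K+1+a+1 = K+a+2 := by omega
  rw [h8, pow_add, pow_add]
  ring

lemma durfee_sum (a K : ℕ) :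
    (∑ r ∈ Finset.range (K+1), dd a r) + gg a K = ∑ r ∈ Finset.range (K+1), dd (a+1) r := by
  induction K with
  | zero =>
    simp only [zero_add, Finset.sum_range_one]
    unfold dd gg
    have i1 : (0:ℕ)+1+a = a+1 := by omega
    have i2 : ((0:ℕ)+1)*(a+1) = a+1 := by ring
    rw [i1, i2, pq_zero_inv,
      show (0:ℕ)*(0+a) = 0 by ring, show (0:ℕ)*(0+(a+1)) = 0 by ring,
      show (0:ℕ)+a = a by omega, show (0:ℕ)+(a+1) = a+1 by omega, pq_inv_succ a]
    ring
  | succ K ih =>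
    rw [Finset.sum_range_succ, Finset.sum_range_succ (f := dd (a+1)), ← ih]
    linear_combination durfee_term a K

lemma coeff_dd_lt (a r n : ℕ) (h : n < r) : coeff n (dd a r) = 0 := by
  apply coeff_X_pow_mul_lt
  calc n < r := h
  _ ≤ r*(r+a) := Nat.le_mul_of_pos_right r (by omega)

/-- The Durfee sum series. -/
def SD (a : ℕ) : PowerSeries ℚ := iSum (dd a)

lemma SD_succ (a : ℕ) : SD a = SD (a+1) := by
  ext n
  rw [SD, SD, coeff_iSum_eq (dd a) (fun i m hm => coeff_dd_lt a i m hm) n (n+1) (by omega),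
    coeff_iSum_eq (dd (a+1)) (fun i m hm => coeff_dd_lt (a+1) i m hm) n (n+1) (by omega),
    ← durfee_sum a n, map_add]
  have : coeff n (gg a n) = 0 := by
    apply coeff_X_pow_mul_lt
    calc n < n+1 := by omega
    _ ≤ (n+1)*(n+1+a) := Nat.le_mul_of_pos_right (n+1) (by omega)
  rw [this, add_zero]

lemma SD_add (a b : ℕ) : SD a = SD (a+b) := by
  induction b with
  | zero => rfl
  | succ b ih => rw [ih, show a+(b+1) = (a+b)+1 by omega, ← SD_succ]

lemma pqInf_mul_SD (a : ℕ) : pqInf * SD a = 1 := by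
  ext n
  set B := a + (n+1) with hB
  rw [SD_add a (n+1)]
  have h1 : ∀ m ≤ n, coeff m (SD B) = coeff m (∑ r ∈ Finset.range (n+1), dd B r) := by
    intro m hm
    rw [SD, coeff_iSum_eq (dd B) (fun i m hm => coeff_dd_lt B i m hm) m (n+1) (by omega)]
  rw [coeff_mul_congr pqInf h1, mul_comm]
  have h2 : ∀ m ≤ n, coeff m pqInf = coeff m (pq B) := by
    intro m hm; exact coeff_pqInf_eq m B (by omega)
  rw [coeff_mul_congr _ h2, Finset.sum_mul, map_sum]
  have h3 : ∀ r ∈ Finset.range (n+1), r ≠ 0 → coeff n (dd B r * pq B) = 0 := by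
    intro r _ hr
    have : dd B r * pq B = X^(r*(r+B)) * (((pq r)⁻¹ * (pq (r+B))⁻¹) * pq B) := by
      rw [dd]; ring
    rw [this]
    apply coeff_X_pow_mul_lt
    calc n < 1 + B := by omega
    _ ≤ r * (r + B) := by
        have h1r : 1 ≤ r := by omega
        calc 1 + B ≤ r + B := by omega
        _ = 1 * (r + B) := (one_mul _).symm
        _ ≤ r * (r + B) := Nat.mul_le_mul_right _ h1r
  rw [Finset.sum_eq_single_of_mem 0 (by simp) h3]
  have h4 : dd B 0 * pq B = 1 := by
    rw [dd, show (0:ℕ)*(0+B) = 0 by ring, show (0:ℕ)+B = B by omega, pq_zero_inv, pow_zero]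
    calc (1:PowerSeries ℚ) * (1 * (pq B)⁻¹) * pq B = pq B * (pq B)⁻¹ := by ring
    _ = 1 := pq_mul_inv B
  rw [h4]

/-! ### The main summand -/

/-- summand of the main series, without the global `X^((3ℓ²+ℓ)/2)` prefactor. -/
def AA (ℓ n : ℕ) : PowerSeries ℚ :=
  X^(n*(n+2*ℓ)+n) * (1 - X^ℓ) * (pq n)⁻¹ * (pq (n+2*ℓ))⁻¹ * (1 - X^(n+ℓ))⁻¹

/-- termwise step identity. -/
lemma step_term (ℓ K : ℕ) :
    AA ℓ (K+1) + X^(3*ℓ+2) * AA (ℓ+1) K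
      = (1 - X^(2*ℓ+1)) * dd (2*ℓ+1) (K+1) := by
  have hc := one_sub_mul_inv (K+1+ℓ) (by omega)
  unfold AA dd
  have h1 : (K+1)*((K+1)+2*ℓ)+(K+1) = (K+1)*(K+2*ℓ+2) := by ring
  have h2 : (K+1)*((K+1)+(2*ℓ+1)) = (K+1)*(K+2*ℓ+2) := by ring
  have i2 : K+2*(ℓ+1) = K+2*ℓ+2 := by omega
  have i3 : K+1+(2*ℓ+1) = K+2*ℓ+2 := by omega
  have i4 : K+(ℓ+1) = K+1+ℓ := by omega
  have h3 : K*(K+2*ℓ+2)+K = K*(K+2*ℓ+3) := by ring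
  have h4 : (X:PowerSeries ℚ)^(K*(K+2*ℓ+3)) * X^(3*ℓ+2) = X^((K+1)*(K+2*ℓ+2)) * X^ℓ := by
    rw [← pow_add, ← pow_add]; congr 1; ring
  rw [h1, h2, i2, i3, i4, h3]
  rw [pq_inv_succ (K+1+2*ℓ), pq_inv_succ K]
  have i1 : K+1+2*ℓ+1 = K+2*ℓ+2 := by omega
  rw [i1]
  linear_combination (X^((K+1)*(K+2*ℓ+2)) * (pq (K+1))⁻¹ * (pq (K+2*ℓ+2))⁻¹ * (1 - X^(2*ℓ+1))) * hc + ((1 - X^(ℓ+1)) * (1 - X^(K+1)) * (pq (K+1))⁻¹ * (pq (K+2*ℓ+2))⁻¹ * (1 - X^(K+1+ℓ))⁻¹) * h4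

/-- base (r = 0) step identity; needs `1 ≤ ℓ`. -/
lemma step_base (ℓ : ℕ) (hℓ : 1 ≤ ℓ) :
    AA ℓ 0 = (1 - X^(2*ℓ+1)) * dd (2*ℓ+1) 0 := by
  have hc := one_sub_mul_inv ℓ hℓ
  unfold AA dd
  rw [show (0:ℕ)*(0+2*ℓ)+0 = 0 by ring, show (0:ℕ)*(0+(2*ℓ+1)) = 0 by ring,
    show (0:ℕ)+2*ℓ = 2*ℓ by omega, show (0:ℕ)+(2*ℓ+1) = 2*ℓ+1 by omega,
    show (0:ℕ)+ℓ = ℓ by omega, pq_zero_inv, pq_inv_succ (2*ℓ)]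
  linear_combination ((pq (2*ℓ+1))⁻¹ * (1 - X^(2*ℓ+1))) * hc

lemma step_sum (ℓ K : ℕ) (hℓ : 1 ≤ ℓ) :
    (∑ r ∈ Finset.range (K+2), AA ℓ r) + X^(3*ℓ+2) * (∑ r ∈ Finset.range (K+1), AA (ℓ+1) r)
      = (1 - X^(2*ℓ+1)) * ∑ r ∈ Finset.range (K+2), dd (2*ℓ+1) r := by
  induction K with
  | zero =>
    have e2 : ∀ f : ℕ → PowerSeries ℚ, ∑ r ∈ Finset.range (0+2), f r = f 0 + f 1 := by
      intro f; rw [show (0:ℕ)+2 = 2 by rfl, Finset.sum_range_succ, Finset.sum_range_one]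
    have e1 : ∀ f : ℕ → PowerSeries ℚ, ∑ r ∈ Finset.range (0+1), f r = f 0 := by
      intro f; rw [show (0:ℕ)+1 = 1 by rfl, Finset.sum_range_one]
    rw [e2, e1, e2]
    have h0 := step_base ℓ hℓ
    have h1 := step_term ℓ 0
    rw [show (0:ℕ)+1 = 1 from rfl] at h1
    linear_combination h0 + h1
  | succ K ih =>
    rw [show K+1+2 = (K+2)+1 by omega, Finset.sum_range_succ, Finset.sum_range_succ
      (f := AA (ℓ+1)), Finset.sum_range_succ (f := dd (2*ℓ+1)), show K+2 = K+1+1 by omega]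
    have h1 := step_term ℓ (K+1)
    linear_combination ih + h1

/-! ### Exponent arithmetic -/

def EE (ℓ : ℕ) : ℕ := (3*ℓ^2+ℓ)/2

lemma EE_two (ℓ : ℕ) : 2 * EE ℓ = 3*ℓ^2+ℓ := by
  obtain ⟨k, hk | hk⟩ : ∃ k, ℓ = 2*k ∨ ℓ = 2*k+1 := ⟨ℓ/2, by omega⟩ <;> subst hk <;> rw [EE]
  · rw [show 3*(2*k)^2+2*k = 2*(6*k^2+k) by ring, Nat.mul_div_cancel_left _ (by norm_num)]
  · rw [show 3*(2*k+1)^2+(2*k+1) = 2*(6*k^2+7*k+2) by ring,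
      Nat.mul_div_cancel_left _ (by norm_num)]

lemma EE_succ (ℓ : ℕ) : EE (ℓ+1) = EE ℓ + (3*ℓ+2) := by
  have a := EE_two ℓ
  have b := EE_two (ℓ+1)
  have c : 3*(ℓ+1)^2+(ℓ+1) = 3*ℓ^2+ℓ + (6*ℓ+4) := by ring
  omega

/-! ### The main series -/

def FF (ℓ : ℕ) : PowerSeries ℚ := iSum (fun n => X^(EE ℓ) * AA ℓ n)

lemma coeff_XAA_lt (ℓ i n : ℕ) (h : n < i) : coeff n (X^(EE ℓ) * AA ℓ i) = 0 := by
  have : X^(EE ℓ) * AA ℓ i = X^(EE ℓ + (i*(i+2*ℓ)+i)) *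
      ((1 - X^ℓ) * (pq i)⁻¹ * (pq (i+2*ℓ))⁻¹ * (1 - X^(i+ℓ))⁻¹) := by
    rw [AA, pow_add]; ring
  rw [this]
  apply coeff_X_pow_mul_lt
  calc n < i := h
  _ ≤ i*(i+2*ℓ)+i := Nat.le_add_left i _
  _ ≤ EE ℓ + (i*(i+2*ℓ)+i) := Nat.le_add_left _ _

lemma FF_step (ℓ : ℕ) (hℓ : 1 ≤ ℓ) :
    FF ℓ + FF (ℓ+1) = X^(EE ℓ) * ((1 - X^(2*ℓ+1)) * SD (2*ℓ+1)) := by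
  ext n
  rw [map_add, FF, FF,
    coeff_iSum_eq _ (fun i m hm => coeff_XAA_lt ℓ i m hm) n (n+2) (by omega),
    coeff_iSum_eq _ (fun i m hm => coeff_XAA_lt (ℓ+1) i m hm) n (n+1) (by omega)]
  have hr : ∀ m ≤ n, coeff m (SD (2*ℓ+1))
      = coeff m (∑ r ∈ Finset.range (n+2), dd (2*ℓ+1) r) := by
    intro m hm
    rw [SD, coeff_iSum_eq (dd (2*ℓ+1)) (fun i m hm => coeff_dd_lt (2*ℓ+1) i m hm) m (n+2)
      (by omega)]
  rw [show X^(EE ℓ) * ((1 - X^(2*ℓ+1)) * SD (2*ℓ+1))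
      = (X^(EE ℓ) * (1 - X^(2*ℓ+1))) * SD (2*ℓ+1) by ring,
    coeff_mul_congr _ hr]
  rw [← map_add]
  congr 1
  rw [← Finset.mul_sum, ← Finset.mul_sum, EE_succ, pow_add]
  rw [show (∑ i ∈ Finset.range (n+2), AA ℓ i) =
    ∑ r ∈ Finset.range (n+2), AA ℓ r from rfl]
  calc X^(EE ℓ) * ∑ r ∈ Finset.range (n+2), AA ℓ r
      + X^(EE ℓ) * X^(3*ℓ+2) * ∑ r ∈ Finset.range (n+1), AA (ℓ+1) r
      = X^(EE ℓ) * ((∑ r ∈ Finset.range (n+2), AA ℓ r)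
        + X^(3*ℓ+2) * ∑ r ∈ Finset.range (n+1), AA (ℓ+1) r) := by ring
  _ = X^(EE ℓ) * ((1 - X^(2*ℓ+1)) * ∑ r ∈ Finset.range (n+2), dd (2*ℓ+1) r) := by
      rw [step_sum ℓ n hℓ]
  _ = X^(EE ℓ) * (1 - X^(2*ℓ+1)) * ∑ r ∈ Finset.range (n+2), dd (2*ℓ+1) r := by ring

/-! ### The truncated pentagonal polynomial -/

def PP (ℓ : ℕ) : PowerSeries ℚ :=
  ∑ j ∈ Finset.Icc (-(ℓ : ℤ)) ((ℓ : ℤ) - 1), zsgn j * X ^ ((j * (3 * j + 1) / 2).toNat)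

lemma zsgn_coe (m : ℕ) : zsgn (m:ℤ) = (-1:PowerSeries ℚ)^m := by
  rcases Nat.even_or_odd m with h | h
  · rw [zsgn, if_pos ((Int.even_coe_nat m).mpr h), h.neg_one_pow]
  · rw [zsgn, if_neg (by rw [Int.even_coe_nat]; exact (Nat.not_even_iff_odd).mpr h),
      h.neg_one_pow]

lemma zsgn_neg_coe (m : ℕ) : zsgn (-(m:ℤ)-1) = (-1:PowerSeries ℚ)^(m+1) := by
  have h0 : (-(m:ℤ)-1) = -(((m+1:ℕ)):ℤ) := by push_cast; ring
  rw [h0, zsgn]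
  have he : Even (-(((m+1:ℕ)):ℤ)) ↔ Even (m+1) := by
    rw [even_neg, Int.even_coe_nat]
  rcases Nat.even_or_odd (m+1) with h | h
  · rw [if_pos (he.mpr h), h.neg_one_pow]
  · rw [if_neg (fun hh => (Nat.not_even_iff_odd).mpr h (he.mp hh)), h.neg_one_pow]

lemma toNat_pos (ℓ : ℕ) : (((ℓ:ℤ) * (3*(ℓ:ℤ)+1)) / 2).toNat = EE ℓ := by
  have h := EE_two ℓ
  have hc : (ℓ:ℤ) * (3*(ℓ:ℤ)+1) = 2*(EE ℓ:ℤ) := by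
    have h2 : ((ℓ*(3*ℓ+1) : ℕ) : ℤ) = ((2*EE ℓ : ℕ):ℤ) := by
      rw [show ℓ*(3*ℓ+1) = 3*ℓ^2+ℓ from by ring, ← h]
    push_cast at h2
    linear_combination h2
  rw [hc]
  omega

lemma toNat_neg (ℓ : ℕ) :
    ((-(ℓ:ℤ)-1) * (3*(-(ℓ:ℤ)-1)+1) / 2).toNat = EE ℓ + (2*ℓ+1) := by
  have h := EE_two ℓ
  have hc : (-(ℓ:ℤ)-1) * (3*(-(ℓ:ℤ)-1)+1) = 2*((EE ℓ : ℤ) + (2*ℓ+1)) := by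
    have h2 : (ℓ+1)*(3*ℓ+2) = 2*EE ℓ + (4*ℓ+2) := by
      have : (ℓ+1)*(3*ℓ+2) = (3*ℓ^2+ℓ) + (4*ℓ+2) := by ring
      omega
    have h3 : (((ℓ+1)*(3*ℓ+2) : ℕ) : ℤ) = ((2*EE ℓ + (4*ℓ+2) : ℕ) : ℤ) := by
      exact_mod_cast h2
    push_cast at h3
    calc (-(ℓ:ℤ)-1) * (3*(-(ℓ:ℤ)-1)+1) = ((ℓ:ℤ)+1)*(3*(ℓ:ℤ)+2) := by ring
    _ = 2*((EE ℓ : ℤ) + (2*ℓ+1)) := by linear_combination h3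
  rw [hc]
  omega

lemma PP_one : PP 1 = 1 - X := by
  rw [PP]
  have hb : ((1:ℕ):ℤ) = 1 := by norm_num
  rw [hb]
  have hIcc : Finset.Icc (-1:ℤ) (1-1) = {-1, 0} := by
    ext x; simp [Finset.mem_Icc]; omega
  rw [hIcc, Finset.sum_insert (by simp), Finset.sum_singleton]
  have e1 : (((-1:ℤ) * (3 * (-1) + 1) / 2)).toNat = 1 := by norm_num
  have e2 : (((0:ℤ) * (3 * 0 + 1) / 2)).toNat = 0 := by norm_num
  rw [e1, e2, show zsgn (-1) = -1 from by rw [zsgn, if_neg (by decide)],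
    show zsgn 0 = 1 from by rw [zsgn, if_pos Even.zero]]
  ring

lemma PP_succ (ℓ : ℕ) : PP (ℓ+1) = PP ℓ + (-1:PowerSeries ℚ)^ℓ * X^(EE ℓ)
    + (-1:PowerSeries ℚ)^(ℓ+1) * X^(EE ℓ + (2*ℓ+1)) := by
  rw [PP, PP]
  have hb1 : ((ℓ+1:ℕ):ℤ) = (ℓ:ℤ)+1 := by push_cast; ring
  rw [hb1]
  have hset : Finset.Icc (-((ℓ:ℤ)+1)) ((ℓ:ℤ)+1-1)
      = insert (-(ℓ:ℤ)-1) (insert (ℓ:ℤ) (Finset.Icc (-(ℓ:ℤ)) ((ℓ:ℤ)-1))) := by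
    ext x; simp [Finset.mem_Icc]; omega
  rw [hset, Finset.sum_insert (by simp [Finset.mem_Icc]; try omega),
    Finset.sum_insert (by simp [Finset.mem_Icc]; try omega)]
  rw [zsgn_neg_coe ℓ, zsgn_coe ℓ, toNat_pos ℓ, toNat_neg ℓ]
  ring

/-! ### Base case -/

lemma base_term (n : ℕ) : X^(2:ℕ) * AA 1 n = (1-X) * dd 1 (n+1) := by
  have hsplit := pq_inv_split n
  unfold AA dd
  rw [show n+2*1 = n+2 from by omega, show (n+1)+1 = n+2 from by omega,
    show (n+1)*(n+2) = (n+1)*(n+2) from rfl, hsplit]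
  have hx : (X:PowerSeries ℚ)^(2:ℕ) * X^(n*(n+2)+n) = X^((n+1)*(n+2)) := by
    rw [← pow_add]; congr 1; ring
  linear_combination ((1 - X^(1:ℕ)) * (pq n)⁻¹ * (pq (n+2))⁻¹ * (1 - X^(n+1))⁻¹) * hx

lemma one_sub_X_mul_dd : (1 - X) * dd 1 0 = 1 := by
  have h1 : pq 1 = 1 - X := by
    rw [pq_succ 0, show pq 0 = 1 from by simp [pq], one_mul, zero_add, pow_one]
  rw [dd, show (0:ℕ)*(0+1) = 0 from by ring, show (0:ℕ)+1 = 1 from rfl, pq_zero_inv, pow_zero,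
    ← h1]
  calc pq 1 * (1 * (1 * (pq 1)⁻¹)) = pq 1 * (pq 1)⁻¹ := by ring
  _ = 1 := pq_mul_inv 1

lemma FF_one : FF 1 = (1 - X) * SD 1 - 1 := by
  ext n
  rw [FF, coeff_iSum_eq _ (fun i m hm => coeff_XAA_lt 1 i m hm) n (n+1) (by omega)]
  have hE1 : EE 1 = 2 := by norm_num [EE]
  rw [hE1]
  have key : ∑ i ∈ Finset.range (n+1), X^(2:ℕ) * AA 1 i
      = (1 - X) * (∑ r ∈ Finset.range (n+2), dd 1 r) - 1 := by
    have h2 : ∑ i ∈ Finset.range (n+1), X^(2:ℕ) * AA 1 i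
        = ∑ i ∈ Finset.range (n+1), (1-X) * dd 1 (i+1) :=
      Finset.sum_congr rfl (fun i _ => base_term i)
    rw [h2, Finset.sum_range_succ' (dd 1) (n+1), mul_add, one_sub_X_mul_dd, ← Finset.mul_sum]
    ring
  rw [key]
  have hr : ∀ m ≤ n, coeff m (SD 1)
      = coeff m (∑ r ∈ Finset.range (n+2), dd 1 r) := by
    intro m hm
    rw [SD, coeff_iSum_eq (dd 1) (fun i m hm => coeff_dd_lt 1 i m hm) m (n+2) (by omega)]
  rw [map_sub, map_sub, coeff_mul_congr _ hr]

/-! ### Main claim by induction -/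

lemma main_claim (ℓ : ℕ) (hℓ : 1 ≤ ℓ) :
    pqInf * FF ℓ = (-1:PowerSeries ℚ)^(ℓ-1) * (PP ℓ - pqInf) := by
  induction ℓ, hℓ using Nat.le_induction with
  | base =>
    rw [FF_one, PP_one, show (1:ℕ)-1 = 0 from rfl, pow_zero, one_mul]
    linear_combination (1-X) * pqInf_mul_SD 1
  | succ n hn IH =>
    obtain ⟨m, rfl⟩ : ∃ m, n = m+1 := ⟨n-1, by omega⟩
    have FFrel := FF_step (m+1) (by omega)
    have SDl := pqInf_mul_SD (2*(m+1)+1)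
    have Psucc := PP_succ (m+1)
    rw [show (m+1)-1 = m from rfl] at IH
    rw [show (m+1+1)-1 = m+1 from rfl]
    have hs : ((-1:PowerSeries ℚ)^m) * ((-1:PowerSeries ℚ)^m) = 1 := by
      rw [← pow_add, ← two_mul, pow_mul]; norm_num
    rw [pow_succ] at Psucc ⊢
    rw [show m+1+1 = (m+1)+1 from rfl, pow_succ, pow_succ] at Psucc
    linear_combination pqInf * FFrel + (-1) * IH
      + (X^(EE (m+1)) * (1 - X^(2*(m+1)+1))) * SDl
      + ((-1:PowerSeries ℚ)^m) * Psucc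
      + (X^(EE (m+1)) * X^(2*(m+1)+1) - X^(EE (m+1))) * hs

/-- Truncated Euler pentagonal number theorem:
`(1/(q;q)_∞) Σ_{j=-ℓ}^{ℓ-1} (-1)^j q^{j(3j+1)/2}
 = 1 + (-1)^{ℓ-1} Σ_{n≥0} q^{(2ℓ+1)n+n²+(3ℓ²+ℓ)/2}(1-q^ℓ)/((q;q)_n (q;q)_{n+2ℓ}(1-q^{n+ℓ}))`. -/
theorem truncated_pentagonal (ℓ : ℕ) (hℓ : 1 ≤ ℓ) :
    pqInf⁻¹ * ∑ j ∈ Finset.Icc (-(ℓ : ℤ)) ((ℓ : ℤ) - 1), zsgn j * X ^ ((j * (3 * j + 1) / 2).toNat)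
    = 1 + (-1 : PowerSeries ℚ) ^ (ℓ - 1) *
        iSum (fun n => X ^ ((2 * ℓ + 1) * n + n ^ 2 + (3 * ℓ ^ 2 + ℓ) / 2) * (1 - X ^ ℓ) *
          (pq n)⁻¹ * (pq (n + 2 * ℓ))⁻¹ * (1 - X ^ (n + ℓ))⁻¹) := by
  have hfun : (fun n => X ^ ((2 * ℓ + 1) * n + n ^ 2 + (3 * ℓ ^ 2 + ℓ) / 2) * (1 - X ^ ℓ) *
      (pq n)⁻¹ * (pq (n + 2 * ℓ))⁻¹ * (1 - X ^ (n + ℓ))⁻¹)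
      = fun n => X^(EE ℓ) * AA ℓ n := by
    funext n
    rw [AA, EE, show (2*ℓ+1)*n + n^2 + (3*ℓ^2+ℓ)/2 = (3*ℓ^2+ℓ)/2 + (n*(n+2*ℓ)+n) from by ring,
      pow_add]
    ring
  have hiSum : iSum (fun n => X ^ ((2 * ℓ + 1) * n + n ^ 2 + (3 * ℓ ^ 2 + ℓ) / 2) * (1 - X ^ ℓ) *
      (pq n)⁻¹ * (pq (n + 2 * ℓ))⁻¹ * (1 - X ^ (n + ℓ))⁻¹) = FF ℓ := by
    rw [FF]; exact congrArg iSum hfun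
  rw [hiSum, show (∑ j ∈ Finset.Icc (-(ℓ : ℤ)) ((ℓ : ℤ) - 1),
    zsgn j * X ^ ((j * (3 * j + 1) / 2).toNat)) = PP ℓ from rfl]
  have hmain := main_claim ℓ hℓ
  have hQ : constantCoeff pqInf ≠ 0 := by
    have h0 : constantCoeff pqInf = 1 := by
      rw [← PowerSeries.coeff_zero_eq_constantCoeff_apply, coeff_pqInf_eq 0 1 (by omega),
        PowerSeries.coeff_zero_eq_constantCoeff_apply, constCoeff_pq]
    rw [h0]; exact one_ne_zero
  have hQi : pqInf * pqInf⁻¹ = 1 := PowerSeries.mul_inv_cancel _ hQ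
  have hs : ((-1:PowerSeries ℚ)^(ℓ-1)) * ((-1:PowerSeries ℚ)^(ℓ-1)) = 1 := by
    rw [← pow_add, ← two_mul, pow_mul]; norm_num
  have hP : PP ℓ = pqInf * (1 + (-1:PowerSeries ℚ)^(ℓ-1) * FF ℓ) := by
    linear_combination (-((-1:PowerSeries ℚ)^(ℓ-1))) * hmain + (-(PP ℓ - pqInf)) * hs
  rw [hP]
  linear_combination (1 + (-1:PowerSeries ℚ)^(ℓ-1) * FF ℓ) * hQi
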